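/- For every integer v ≥ 1 and all natural numbers L, M, Σ_{j∈ℤ} (-1)^j q^(vj²) [L+M-(v-1)j choose L-vj]_q [L+v+M+(v-1)j choose L+v+vj]_q = Σ_{j∈ℤ} (-1)^j q^(vj²) [L+M-(v-1)j choose L-vj]_q [L+v-1+M+(v-1)j choose L+v-1+vj]_q. -/
import Mathlib


open LaurentPolynomial Finset

noncomputable section

/-- Gaussian binomial coefficient with natural indices, in base `x`, defined by the
`q`-Pascal recurrence `[n+1, k+1] = [n, k] + x^(k+1) * [n, k+1]`.  It vanishes for `k > n`. -/
def gaussAux (x : LaurentPolynomial ℤ) : ℕ → ℕ → LaurentPolynomial ℤ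
  | _, 0 => 1
  | 0, _ + 1 => 0
  | n + 1, k + 1 => gaussAux x n k + x ^ (k + 1) * gaussAux x n (k + 1)

/-- The Gaussian binomial coefficient `[n choose k]` in base `x`, for integer indices:
it is zero when `n < 0` or `k < 0` (and, by `gaussAux`, also when `k > n`). -/
def qbin (x : LaurentPolynomial ℤ) (n k : ℤ) : LaurentPolynomial ℤ :=
  if 0 ≤ n ∧ 0 ≤ k then gaussAux x n.toNat k.toNat else 0

/-- `(-1)^j` for an integer `j`, as a Laurent polynomial. -/
def m1 (j : ℤ) : LaurentPolynomial ℤ := ((((-1 : ℤˣ) ^ j : ℤˣ) : ℤ) : LaurentPolynomial ℤ)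

lemma gaussAux_zero (x : LaurentPolynomial ℤ) (n : ℕ) : gaussAux x n 0 = 1 := by
  cases n <;> rfl

lemma gaussAux_eq_zero_of_lt (x : LaurentPolynomial ℤ) {n k : ℕ} (h : n < k) :
    gaussAux x n k = 0 := by
  induction n generalizing k with
  | zero =>
    match k, h with
    | k + 1, _ => rfl
  | succ n ih =>
    match k, h with
    | k + 1, h =>
      rw [gaussAux, ih (by omega), ih (by omega)]
      ring

lemma qbin_neg_right (x : LaurentPolynomial ℤ) {n k : ℤ} (h : k < 0) : qbin x n k = 0 := by
  rw [qbin, if_neg (by omega)]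

lemma qbin_neg_left (x : LaurentPolynomial ℤ) {n k : ℤ} (h : n < 0) : qbin x n k = 0 := by
  rw [qbin, if_neg (by omega)]

lemma qbin_eq_zero_of_lt (x : LaurentPolynomial ℤ) {n k : ℤ} (h : n < k) : qbin x n k = 0 := by
  rw [qbin]
  split
  · next h' => exact gaussAux_eq_zero_of_lt x (by omega)
  · rfl

lemma qbin_pascal (n k : ℤ) (h : ¬(n = -1 ∧ k = -1)) :
    qbin (T 1) (n + 1) (k + 1) = qbin (T 1) n k + T (k + 1) * qbin (T 1) n (k + 1) := by
  rcases lt_or_ge k (-1) with hk | hk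
  · rw [qbin_neg_right _ (by omega), qbin_neg_right _ (by omega : k < 0),
      qbin_neg_right _ (by omega : k + 1 < 0)]
    ring
  rcases lt_or_ge n (-1) with hn | hn
  · rw [qbin_neg_left _ (by omega : n + 1 < 0), qbin_neg_left _ (by omega : n < 0),
      qbin_neg_left _ (by omega : n < 0)]
    ring
  rcases eq_or_lt_of_le hn with hn1 | hn0
  · -- n = -1, so k ≥ 0 by h
    have hk0 : 0 ≤ k := by
      rcases eq_or_lt_of_le hk with h1 | h1
      · exact absurd ⟨hn1.symm, h1.symm⟩ h
      · omega
    rw [qbin_neg_left _ (by omega : n < 0), qbin_neg_left _ (by omega : n < 0),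
      qbin, if_pos ⟨by omega, by omega⟩]
    have h1 : (n + 1).toNat = 0 := by omega
    obtain ⟨m, hm⟩ : ∃ m : ℕ, (k + 1).toNat = m + 1 := ⟨k.toNat, by omega⟩
    rw [h1, hm]
    show (0 : LaurentPolynomial ℤ) = 0 + T (k + 1) * 0
    ring
  · rcases eq_or_lt_of_le hk with hk1 | hk0
    · -- k = -1
      rw [← hk1, show (-1 : ℤ) + 1 = (0 : ℤ) from by ring,
        qbin, if_pos ⟨by omega, le_refl 0⟩, Int.toNat_zero, gaussAux_zero,
        qbin_neg_right _ (by omega : (-1 : ℤ) < 0),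
        qbin, if_pos ⟨by omega, le_refl 0⟩, Int.toNat_zero, gaussAux_zero, T_zero]
      ring
    · -- n ≥ 0, k ≥ 0
      rw [qbin, if_pos ⟨by omega, by omega⟩, qbin, if_pos ⟨by omega, by omega⟩,
        qbin, if_pos ⟨by omega, by omega⟩]
      have h1 : (n + 1).toNat = n.toNat + 1 := by omega
      have h2 : (k + 1).toNat = k.toNat + 1 := by omega
      rw [h1, h2, gaussAux]
      have hT : (T 1 : LaurentPolynomial ℤ) ^ (k.toNat + 1) = T (k + 1) := by
        rw [T_pow, mul_one]
        congr 1
        omega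
      rw [hT]

lemma m1_neg_one_sub (j : ℤ) : m1 (-1 - j) = -m1 j := by
  unfold m1
  have h0 : (-1 : ℤˣ) ^ (-1 - j) = (-1 : ℤˣ)⁻¹ * ((-1 : ℤˣ) ^ j)⁻¹ := by
    rw [zpow_sub, zpow_neg_one]
  rw [Int.units_inv_eq_self, Int.units_inv_eq_self] at h0
  rw [h0]
  push_cast
  ring

lemma two_ne_zero_LP : (2 : LaurentPolynomial ℤ) ≠ 0 := by
  intro h2
  have h3 : Polynomial.toLaurent (2 : Polynomial ℤ) = Polynomial.toLaurent (0 : Polynomial ℤ) := by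
    simp only [map_ofNat, map_zero]
    exact h2
  have := Polynomial.toLaurent_injective h3
  norm_num at this

lemma finsum_eq_zero_of_antisymm (f : ℤ → LaurentPolynomial ℤ)
    (h : ∀ j, f (-1 - j) = -f j) : ∑ᶠ j, f j = 0 := by
  have h1 : ∑ᶠ j : ℤ, f (-1 - j) = ∑ᶠ j, f j :=
    finsum_comp_equiv ⟨fun j => -1 - j, fun j => -1 - j, fun j => by ring, fun j => by ring⟩
  have h2 : ∑ᶠ j : ℤ, f (-1 - j) = -∑ᶠ j, f j := by
    rw [finsum_congr h]
    exact finsum_neg_distrib f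
  have h3 : (∑ᶠ j, f j) = -(∑ᶠ j, f j) := h1.symm.trans h2
  have h4 : (∑ᶠ j, f j) + (∑ᶠ j, f j) = 0 := eq_neg_iff_add_eq_zero.mp h3
  have h5 : (2 : LaurentPolynomial ℤ) * (∑ᶠ j, f j) = 0 := by rw [two_mul]; exact h4
  rcases mul_eq_zero.mp h5 with h6 | h6
  · exact absurd h6 two_ne_zero_LP
  · exact h6

theorem stmt14 (v : ℤ) (hv : 1 ≤ v) (L M : ℕ) :
    (∑ᶠ j : ℤ, m1 j * T (v * j ^ 2) *
        qbin (T 1) ((L : ℤ) + M - (v - 1) * j) ((L : ℤ) - v * j) *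
          qbin (T 1) ((L : ℤ) + v + M + (v - 1) * j) ((L : ℤ) + v + v * j)) =
      ∑ᶠ j : ℤ, m1 j * T (v * j ^ 2) *
        qbin (T 1) ((L : ℤ) + M - (v - 1) * j) ((L : ℤ) - v * j) *
          qbin (T 1) ((L : ℤ) + v - 1 + M + (v - 1) * j) ((L : ℤ) + v - 1 + v * j) := by
  have hA : ∀ j : ℤ, j ∉ Set.Icc (-(M : ℤ)) (L : ℤ) →
      qbin (T 1) ((L : ℤ) + M - (v - 1) * j) ((L : ℤ) - v * j) = 0 := by
    intro j hj
    rw [Set.mem_Icc, not_and_or] at hj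
    rcases hj with hj | hj
    · push_neg at hj
      apply qbin_eq_zero_of_lt
      have h0 : ((L : ℤ) - v * j) - ((L : ℤ) + M - (v - 1) * j) = -(M : ℤ) - j := by ring
      linarith
    · push_neg at hj
      apply qbin_neg_right
      have h1 : 0 ≤ (v - 1) * j := mul_nonneg (by omega) (by omega)
      have h0 : (L : ℤ) - v * j = (L : ℤ) - j - (v - 1) * j := by ring
      linarith
  have hsupp : ∀ f : ℤ → LaurentPolynomial ℤ,
      (∀ j, qbin (T 1) ((L : ℤ) + M - (v - 1) * j) ((L : ℤ) - v * j) = 0 → f j = 0) →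
      (Function.support f).Finite := by
    intro f hf
    apply (Set.finite_Icc (-(M : ℤ)) (L : ℤ)).subset
    intro j hj
    by_contra hmem
    exact hj (hf j (hA j hmem))
  set d : ℤ → LaurentPolynomial ℤ := fun j =>
    m1 j * T (v * j ^ 2) * qbin (T 1) ((L : ℤ) + M - (v - 1) * j) ((L : ℤ) - v * j) *
      (T ((L : ℤ) + v + v * j) *
        qbin (T 1) ((L : ℤ) + v - 1 + M + (v - 1) * j) ((L : ℤ) + v + v * j)) with hd_def
  have key : ∀ j : ℤ,
      m1 j * T (v * j ^ 2) * qbin (T 1) ((L : ℤ) + M - (v - 1) * j) ((L : ℤ) - v * j) *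
        qbin (T 1) ((L : ℤ) + v + M + (v - 1) * j) ((L : ℤ) + v + v * j)
      = m1 j * T (v * j ^ 2) * qbin (T 1) ((L : ℤ) + M - (v - 1) * j) ((L : ℤ) - v * j) *
        qbin (T 1) ((L : ℤ) + v - 1 + M + (v - 1) * j) ((L : ℤ) + v - 1 + v * j) + d j := by
    intro j
    have hside : ¬((L : ℤ) + v - 1 + M + (v - 1) * j = -1 ∧ (L : ℤ) + v - 1 + v * j = -1) := by
      rintro ⟨h1, h2⟩
      have hj : j = (M : ℤ) := by linarith
      subst hj
      have h3 : 0 ≤ v * (M : ℤ) := mul_nonneg (by omega) (by positivity)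
      have h4 : 0 ≤ (L : ℤ) := by positivity
      linarith
    have hp := qbin_pascal ((L : ℤ) + v - 1 + M + (v - 1) * j) ((L : ℤ) + v - 1 + v * j) hside
    rw [show (L : ℤ) + v - 1 + M + (v - 1) * j + 1 = (L : ℤ) + v + M + (v - 1) * j from by ring,
      show (L : ℤ) + v - 1 + v * j + 1 = (L : ℤ) + v + v * j from by ring] at hp
    rw [hp, hd_def]
    ring
  have hsR : (Function.support fun j : ℤ =>
      m1 j * T (v * j ^ 2) * qbin (T 1) ((L : ℤ) + M - (v - 1) * j) ((L : ℤ) - v * j) *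
        qbin (T 1) ((L : ℤ) + v - 1 + M + (v - 1) * j) ((L : ℤ) + v - 1 + v * j)).Finite := by
    apply hsupp
    intro j h
    rw [h]
    ring
  have hsd : (Function.support d).Finite := by
    apply hsupp
    intro j h
    simp only [hd_def, h]
    ring
  have hdzero : ∑ᶠ j, d j = 0 := by
    apply finsum_eq_zero_of_antisymm d
    intro j
    have e1 : (L : ℤ) + M - (v - 1) * (-1 - j) = (L : ℤ) + v - 1 + M + (v - 1) * j := by ring
    have e2 : (L : ℤ) - v * (-1 - j) = (L : ℤ) + v + v * j := by ring
    have e3 : (L : ℤ) + v - 1 + M + (v - 1) * (-1 - j) = (L : ℤ) + M - (v - 1) * j := by ring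
    have e4 : (L : ℤ) + v + v * (-1 - j) = (L : ℤ) - v * j := by ring
    calc d (-1 - j)
        = m1 (-1 - j) * (T (v * (-1 - j) ^ 2) * T ((L : ℤ) + v + v * (-1 - j))) *
            (qbin (T 1) ((L : ℤ) + M - (v - 1) * (-1 - j)) ((L : ℤ) - v * (-1 - j)) *
              qbin (T 1) ((L : ℤ) + v - 1 + M + (v - 1) * (-1 - j))
                ((L : ℤ) + v + v * (-1 - j))) := by
          simp only [hd_def]
          ring
      _ = -m1 j * (T (v * j ^ 2) * T ((L : ℤ) + v + v * j)) *
            (qbin (T 1) ((L : ℤ) + v - 1 + M + (v - 1) * j) ((L : ℤ) + v + v * j) *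
              qbin (T 1) ((L : ℤ) + M - (v - 1) * j) ((L : ℤ) - v * j)) := by
          rw [m1_neg_one_sub, e1, e2, e3, e4, ← T_add, ← T_add]
          congr 3
          ring
      _ = -d j := by
          simp only [hd_def]
          ring
  calc (∑ᶠ j : ℤ, m1 j * T (v * j ^ 2) *
        qbin (T 1) ((L : ℤ) + M - (v - 1) * j) ((L : ℤ) - v * j) *
          qbin (T 1) ((L : ℤ) + v + M + (v - 1) * j) ((L : ℤ) + v + v * j))
      = ∑ᶠ j : ℤ, (m1 j * T (v * j ^ 2) *
          qbin (T 1) ((L : ℤ) + M - (v - 1) * j) ((L : ℤ) - v * j) *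
            qbin (T 1) ((L : ℤ) + v - 1 + M + (v - 1) * j) ((L : ℤ) + v - 1 + v * j) + d j) :=
        finsum_congr key
    _ = (∑ᶠ j : ℤ, m1 j * T (v * j ^ 2) *
          qbin (T 1) ((L : ℤ) + M - (v - 1) * j) ((L : ℤ) - v * j) *
            qbin (T 1) ((L : ℤ) + v - 1 + M + (v - 1) * j) ((L : ℤ) + v - 1 + v * j)) +
          ∑ᶠ j, d j := finsum_add_distrib hsR hsd
    _ = _ := by rw [hdzero, add_zero]
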